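/- The inequality S(2,3,4) < 8π·(2+3+4−4) + 12π·E(2√2/3) holds; explicitly, (4π/√12)·( 24·E(√(5/12)) − 3·K(√(5/12)) ) < 40π + 12π·E(2√2/3). -/
import Mathlib


open Real

/-- Complete elliptic integral of the first kind. -/
noncomputable def completeEllipticK (k : ℝ) : ℝ :=
  ∫ θ in (0:ℝ)..(π/2), 1 / Real.sqrt (1 - k^2 * Real.sin θ ^ 2)

/-- Complete elliptic integral of the second kind. -/
noncomputable def completeEllipticE (k : ℝ) : ℝ :=
  ∫ θ in (0:ℝ)..(π/2), Real.sqrt (1 - k^2 * Real.sin θ ^ 2)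

/-- The area `S(a,b,c)` of the generalized Lawson surface `T_{a,b,c}`. -/
noncomputable def lawsonArea (a b c : ℝ) : ℝ :=
  4 * π / Real.sqrt (c^2 - a^2) *
    (2 * (c^2 - a^2) * completeEllipticE (Real.sqrt ((b^2 - a^2) / (c^2 - a^2)))
      - (c^2 - a^2 - b^2) * completeEllipticK (Real.sqrt ((b^2 - a^2) / (c^2 - a^2))))

lemma ellipticE_nonneg (k : ℝ) : 0 ≤ completeEllipticE k := by
  unfold completeEllipticE
  apply intervalIntegral.integral_nonneg (by positivity)
  intro x _
  exact Real.sqrt_nonneg _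

lemma ellipticE_le (k : ℝ) : completeEllipticE k ≤ π / 2 := by
  unfold completeEllipticE
  have h : (∫ θ in (0:ℝ)..(π/2), Real.sqrt (1 - k^2 * Real.sin θ ^ 2))
      ≤ ∫ θ in (0:ℝ)..(π/2), (1:ℝ) := by
    apply intervalIntegral.integral_mono_on (by positivity)
    · exact ((Real.continuous_sqrt.comp (by continuity)).intervalIntegrable _ _)
    · exact intervalIntegrable_const
    · intro x _
      rw [Real.sqrt_le_one]
      nlinarith [sq_nonneg (k * Real.sin x)]
  simpa using h

lemma ellipticK_ge : π / 2 ≤ completeEllipticK (Real.sqrt (5/12)) := by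
  unfold completeEllipticK
  have hk : (Real.sqrt (5/12))^2 = 5/12 := Real.sq_sqrt (by norm_num)
  have hpos : ∀ x : ℝ, (0:ℝ) < 1 - (Real.sqrt (5/12))^2 * Real.sin x ^ 2 := by
    intro x
    rw [hk]
    nlinarith [Real.sin_sq_le_one x]
  have h : (∫ θ in (0:ℝ)..(π/2), (1:ℝ))
      ≤ ∫ θ in (0:ℝ)..(π/2), 1 / Real.sqrt (1 - (Real.sqrt (5/12))^2 * Real.sin θ ^ 2) := by
    apply intervalIntegral.integral_mono_on (by positivity)
    · exact intervalIntegrable_const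
    · apply Continuous.intervalIntegrable
      apply Continuous.div continuous_const
      · exact Real.continuous_sqrt.comp (by continuity)
      · intro x
        exact ne_of_gt (Real.sqrt_pos.mpr (hpos x))
    · intro x _
      rw [le_div_iff₀ (Real.sqrt_pos.mpr (hpos x)), one_mul]
      rw [Real.sqrt_le_one]
      rw [hk]
      nlinarith [sq_nonneg (Real.sin x)]
  simpa using h

/-- The exceptional case `(a,b,c) = (2,3,4)`:
`(4π/√12)(24E(√(5/12)) − 3K(√(5/12))) < 40π + 12πE(2√2/3)`. -/
theorem exceptional_234 :
    lawsonArea 2 3 4 < 8 * π * (2 + 3 + 4 - 4)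
        + 12 * π * completeEllipticE (2 * Real.sqrt 2 / 3) ∧
    4 * π / Real.sqrt 12 * (24 * completeEllipticE (Real.sqrt (5 / 12))
        - 3 * completeEllipticK (Real.sqrt (5 / 12)))
      < 40 * π + 12 * π * completeEllipticE (2 * Real.sqrt 2 / 3) := by
  have hpi := Real.pi_pos
  have h12 : (0:ℝ) < Real.sqrt 12 := Real.sqrt_pos.mpr (by norm_num)
  have h12ge : (3.46:ℝ) ≤ Real.sqrt 12 := by
    rw [show (3.46:ℝ) = Real.sqrt (3.46^2) from (Real.sqrt_sq (by norm_num)).symm]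
    exact Real.sqrt_le_sqrt (by norm_num)
  have hE := ellipticE_le (Real.sqrt (5/12))
  have hK := ellipticK_ge
  have hE2 := ellipticE_nonneg (2 * Real.sqrt 2 / 3)
  have key : 4 * π / Real.sqrt 12 * (24 * completeEllipticE (Real.sqrt (5 / 12))
      - 3 * completeEllipticK (Real.sqrt (5 / 12))) < 40 * π := by
    have hc : (0:ℝ) < 4 * π / Real.sqrt 12 := by positivity
    have h1 : 24 * completeEllipticE (Real.sqrt (5 / 12))
        - 3 * completeEllipticK (Real.sqrt (5 / 12)) ≤ 21 * π / 2 := by linarith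
    have h2 : 4 * π / Real.sqrt 12 * (24 * completeEllipticE (Real.sqrt (5 / 12))
        - 3 * completeEllipticK (Real.sqrt (5 / 12)))
        ≤ 4 * π / Real.sqrt 12 * (21 * π / 2) :=
      mul_le_mul_of_nonneg_left h1 (le_of_lt hc)
    have h3 : 4 * π / Real.sqrt 12 * (21 * π / 2) < 40 * π := by
      rw [div_mul_eq_mul_div, div_lt_iff₀ h12]
      nlinarith [Real.pi_lt_d2]
    linarith
  have harea : lawsonArea 2 3 4 = 4 * π / Real.sqrt 12 *
      (24 * completeEllipticE (Real.sqrt (5 / 12))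
        - 3 * completeEllipticK (Real.sqrt (5 / 12))) := by
    unfold lawsonArea
    norm_num
  constructor
  · rw [harea]
    nlinarith
  · nlinarith
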